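/- Let R be a commutative ring, B a formally smooth commutative R-algebra, I an ideal of B, A := B/I with quotient map φ : B → A, and M an A-module. Let d : I/I² → Ω_{B/R} ⊗_B A send the class of x ∈ I to dx ⊗ 1, and let d* : Hom_A(Ω_{B/R} ⊗_B A, M) → Hom_A(I/I², M) be precomposition with d. For every square-zero extension (E, π, ι) of A by M there exists an R-algebra homomorphism λ : B → E with π ∘ λ = φ, and the class in Hom_A(I/I², M)/range(d*) of the A-linear map ν determined by ι(ν(x + I²)) = λ(x) (x ∈ I) does not depend on the choice of λ. The resulting assignment is a bijection from the set of isomorphism classes of square-zero extensions of A by M onto the quotient group Hom_A(I/I², M)/range(d*). -/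

import Mathlib

open TensorProduct

universe u w

/-- A square-zero extension of a commutative `R`-algebra `A` by an `A`-module `M`. -/
structure SquareZeroExtension (R : Type u) (A : Type u) (M : Type w)
    [CommRing R] [CommRing A] [Algebra R A] [AddCommGroup M] [Module A M] where
  /-- The underlying algebra of the extension. -/
  E : Type (max u w)
  [commRing : CommRing E]
  [algebra : Algebra R E]
  /-- The projection onto `A`. -/
  π : E →ₐ[R] A
  surjective : Function.Surjective π
  squareZero : ∀ x ∈ RingHom.ker π, ∀ y ∈ RingHom.ker π, x * y = 0
  /-- The identification of `M` with the kernel of `π`. -/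
  ι : M ≃+ RingHom.ker π
  ι_linear : ∀ (a : A) (m : M) (e : E), π e = a → ((ι (a • m) : E) = e * (ι m : E))

attribute [instance] SquareZeroExtension.commRing SquareZeroExtension.algebra

/-- An isomorphism of square-zero extensions `(E, π, ι) → (E′, π′, ι′)` is an `R`-algebra
isomorphism `f : E → E′` with `π′ ∘ f = π` and `f ∘ ι = ι′`. -/
def SquareZeroExtension.Iso {R A : Type u} {M : Type w}
    [CommRing R] [CommRing A] [Algebra R A] [AddCommGroup M] [Module A M]
    (S S' : SquareZeroExtension R A M) : Prop :=
  ∃ f : S.E ≃ₐ[R] S'.E, (∀ e : S.E, S'.π (f e) = S.π e) ∧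
    ∀ m : M, f (S.ι m : S.E) = (S'.ι m : S'.E)

/-- The submodule of `Hom_A(I/I², M)` consisting of the maps of the form `θ ∘ d`, where
`θ : Ω_{B/R} ⊗_B A → M` is `A`-linear and `d : I/I² → Ω_{B/R} ⊗_B A` sends the class of
`x ∈ I` to `dx ⊗ 1`; i.e. the range of the precomposition map `d*`. -/
def cotangentCoboundaries (R B : Type u) [CommRing R] [CommRing B] [Algebra R B]
    (I : Ideal B) (M : Type w) [AddCommGroup M] [Module (B ⧸ I) M] :
    Submodule (B ⧸ I) (I.Cotangent →ₗ[B ⧸ I] M) where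
  carrier := {ν | ∃ θ : ((B ⧸ I) ⊗[B] Ω[B⁄R]) →ₗ[B ⧸ I] M,
    ∀ x : I, θ ((1 : B ⧸ I) ⊗ₜ[B] KaehlerDifferential.D R B (x : B)) = ν (I.toCotangent x)}
  add_mem' := by
    rintro a b ⟨θ₁, h₁⟩ ⟨θ₂, h₂⟩
    exact ⟨θ₁ + θ₂, fun x => by simp [h₁ x, h₂ x]⟩
  zero_mem' := ⟨0, fun x => by simp⟩
  smul_mem' := by
    rintro c a ⟨θ, h⟩
    exact ⟨c • θ, fun x => by simp [h x]⟩

section Aux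

variable {R B : Type u} [CommRing R] [CommRing B] [Algebra R B] {I : Ideal B}
  {M : Type w} [AddCommGroup M] [Module (B ⧸ I) M]

namespace SquareZeroExtension

variable (S : SquareZeroExtension R (B ⧸ I) M)

lemma coe_add (m n : M) : (S.ι (m + n) : S.E) = (S.ι m : S.E) + (S.ι n : S.E) := by
  rw [map_add]; rfl

lemma coe_sub (m n : M) : (S.ι (m - n) : S.E) = (S.ι m : S.E) - (S.ι n : S.E) := by
  rw [map_sub]; rfl

lemma coe_zero : (S.ι (0 : M) : S.E) = 0 := by rw [map_zero]; rfl

lemma ι_coe_inj {m n : M} (h : (S.ι m : S.E) = (S.ι n : S.E)) : m = n :=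
  S.ι.injective (Subtype.ext h)

lemma π_ι (m : M) : S.π (S.ι m : S.E) = 0 := (S.ι m).2

lemma exists_lift [Algebra.FormallySmooth R B] (S : SquareZeroExtension R (B ⧸ I) M) :
    ∃ l : B →ₐ[R] S.E, S.π.comp l = Ideal.Quotient.mkₐ R I := by
  classical
  set f : MvPolynomial B R →ₐ[R] B := MvPolynomial.aeval id with hfdef
  have hf : Function.Surjective f := fun b => ⟨MvPolynomial.X b, by simp [hfdef]⟩
  obtain ⟨g, hg⟩ := (Algebra.FormallySmooth.iff_split_surjection f hf).mp inferInstance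
  set s : B ⧸ I → S.E := Function.surjInv S.surjective with hsdef
  have hs : ∀ a, S.π (s a) = a := fun a => Function.surjInv_eq S.surjective a
  set h : MvPolynomial B R →ₐ[R] S.E :=
    MvPolynomial.aeval (fun b => s (Ideal.Quotient.mk I b)) with hhdef
  have hcomm : ∀ p, S.π (h p) = Ideal.Quotient.mk I (f p) := by
    have : S.π.comp h = (Ideal.Quotient.mkₐ R I).comp f := by
      apply MvPolynomial.algHom_ext
      intro b
      simp [hhdef, hfdef, hs]
    exact fun p => AlgHom.congr_fun this p
  have hker : ∀ p ∈ RingHom.ker f ^ 2, h p = 0 := by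
    intro p hp
    have hle : RingHom.ker f ^ 2 ≤ RingHom.ker h := by
      rw [pow_two]
      refine Ideal.mul_le.mpr fun p hp q hq => ?_
      have hp' : h p ∈ RingHom.ker S.π := by
        rw [RingHom.mem_ker, hcomm, RingHom.mem_ker.mp hp, map_zero]
      have hq' : h q ∈ RingHom.ker S.π := by
        rw [RingHom.mem_ker, hcomm, RingHom.mem_ker.mp hq, map_zero]
      rw [RingHom.mem_ker, map_mul]
      exact S.squareZero _ hp' _ hq'
    exact RingHom.mem_ker.mp (hle hp)
  set h' : (MvPolynomial B R ⧸ RingHom.ker f ^ 2) →ₐ[R] S.E :=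
    Ideal.Quotient.liftₐ _ h hker with hh'def
  refine ⟨h'.comp g, ?_⟩
  have key : S.π.comp h' = (Ideal.Quotient.mkₐ R I).comp f.kerSquareLift := by
    apply AlgHom.ext
    intro x
    obtain ⟨p, rfl⟩ := Ideal.Quotient.mk_surjective x
    show S.π (h p) = Ideal.Quotient.mkₐ R I (f.kerSquareLift (Ideal.Quotient.mk _ p))
    rw [show f.kerSquareLift (Ideal.Quotient.mk _ p) = f p from rfl]
    exact hcomm p
  apply AlgHom.ext
  intro b
  exact (AlgHom.congr_fun key (g b)).trans
    (congrArg (Ideal.Quotient.mkₐ R I) (AlgHom.congr_fun hg b))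

lemma exists_nu (S : SquareZeroExtension R (B ⧸ I) M) (l : B →ₐ[R] S.E)
    (hl : S.π.comp l = Ideal.Quotient.mkₐ R I) :
    ∃ ν : I.Cotangent →ₗ[B ⧸ I] M,
      ∀ x : I, (S.ι (ν (I.toCotangent x)) : S.E) = l (x : B) := by
  letI : Module B M := Module.compHom M (Ideal.Quotient.mk I)
  have hπl : ∀ b, S.π (l b) = Ideal.Quotient.mk I b := fun b => AlgHom.congr_fun hl b
  have hker : ∀ x : I, l (x : B) ∈ RingHom.ker S.π := fun x => by
    rw [RingHom.mem_ker, hπl, Ideal.Quotient.eq_zero_iff_mem]; exact x.2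
  set f : I →ₗ[B] M :=
  { toFun := fun x => S.ι.symm ⟨l (x : B), hker x⟩
    map_add' := fun x y => by
      show S.ι.symm _ = S.ι.symm _ + S.ι.symm _
      rw [← map_add S.ι.symm]
      congr 1
      apply Subtype.ext
      show l ((x + y : I) : B) = l (x : B) + l (y : B)
      rw [Submodule.coe_add, map_add]
    map_smul' := fun b x => by
      dsimp only [RingHom.id_apply]
      show _ = Ideal.Quotient.mk I b • S.ι.symm ⟨l (x : B), hker x⟩
      rw [← S.ι.symm_apply_apply (Ideal.Quotient.mk I b • S.ι.symm ⟨l (x : B), hker x⟩)]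
      congr 1
      apply Subtype.ext
      have h1 := S.ι_linear (Ideal.Quotient.mk I b)
        (S.ι.symm ⟨l (x : B), hker x⟩) (l b) (hπl b)
      have h2 : (S.ι (S.ι.symm ⟨l (x : B), hker x⟩) : S.E) = l (x : B) := by
        rw [S.ι.apply_symm_apply]
      rw [h1, h2]
      show l ((b • x : I) : B) = _
      have : ((b • x : I) : B) = b * (x : B) := rfl
      rw [this, map_mul] } with hfdef
  have hf0 : ∀ x ∈ (I • ⊤ : Submodule B I), f x = 0 := by
    intro x hx
    refine Submodule.smul_induction_on hx ?_ ?_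
    · intro b hb y _
      have hb' : l b ∈ RingHom.ker S.π := by
        rw [RingHom.mem_ker, hπl, Ideal.Quotient.eq_zero_iff_mem]; exact hb
      have h1 : l ((b • y : I) : B) = 0 := by
        have : ((b • y : I) : B) = b * (y : B) := rfl
        rw [this, map_mul]
        exact S.squareZero _ hb' _ (hker y)
      show S.ι.symm ⟨l ((b • y : I) : B), hker (b • y)⟩ = 0
      rw [show (⟨l ((b • y : I) : B), hker (b • y)⟩ : RingHom.ker S.π) = 0 from
        Subtype.ext h1, map_zero]
    · intro a b ha hb
      rw [map_add, ha, hb, add_zero]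
  have hle : (I • ⊤ : Submodule B I) ≤ LinearMap.ker f := fun x hx =>
    LinearMap.mem_ker.mpr (hf0 x hx)
  set νB : I.Cotangent →ₗ[B] M := Submodule.liftQ _ f hle with hνBdef
  have hνB : ∀ x : I, νB (I.toCotangent x) = S.ι.symm ⟨l (x : B), hker x⟩ := fun x => rfl
  have hmkc : ∀ (b : B) (c : I.Cotangent), Ideal.Quotient.mk I b • c = b • c := fun b c => by
    rw [← algebraMap_smul (B ⧸ I) b c]; rfl
  refine ⟨{ toFun := νB, map_add' := map_add νB, map_smul' := ?_ }, ?_⟩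
  · intro a c
    obtain ⟨b, rfl⟩ := Ideal.Quotient.mk_surjective a
    dsimp only [RingHom.id_apply]
    rw [hmkc, map_smul]
    rfl
  · intro x
    show (S.ι (νB (I.toCotangent x)) : S.E) = l (x : B)
    rw [hνB, S.ι.apply_symm_apply]

end SquareZeroExtension

end Aux
section Aux2

variable {R B : Type u} [CommRing R] [CommRing B] [Algebra R B] {I : Ideal B}
  {M : Type w} [AddCommGroup M] [Module (B ⧸ I) M]

namespace SquareZeroExtension

lemma nu_diff (S : SquareZeroExtension R (B ⧸ I) M) (l l' : B →ₐ[R] S.E)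
    (hl : S.π.comp l = Ideal.Quotient.mkₐ R I) (hl' : S.π.comp l' = Ideal.Quotient.mkₐ R I)
    (ν ν' : I.Cotangent →ₗ[B ⧸ I] M)
    (hν : ∀ x : I, (S.ι (ν (I.toCotangent x)) : S.E) = l (x : B))
    (hν' : ∀ x : I, (S.ι (ν' (I.toCotangent x)) : S.E) = l' (x : B)) :
    ν - ν' ∈ cotangentCoboundaries R B I M := by
  letI : Module B M := Module.compHom M (Ideal.Quotient.mk I)
  letI : Module R M := Module.compHom M ((algebraMap R (B ⧸ I) : R →+* B ⧸ I))
  have halg : ∀ r : R, Ideal.Quotient.mk I (algebraMap R B r) = algebraMap R (B ⧸ I) r :=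
    fun r => (Ideal.Quotient.mkₐ R I).commutes r
  haveI : IsScalarTower R (B ⧸ I) M := ⟨fun r a m => by
    show (r • a) • m = algebraMap R (B ⧸ I) r • (a • m)
    rw [Algebra.smul_def, mul_smul]⟩
  haveI : IsScalarTower R B M := ⟨fun r b m => by
    show Ideal.Quotient.mk I (r • b) • m
      = algebraMap R (B ⧸ I) r • (Ideal.Quotient.mk I b • m)
    rw [Algebra.smul_def, map_mul, halg, mul_smul]⟩
  haveI : IsScalarTower B (B ⧸ I) M := ⟨fun b a m => by
    show (b • a) • m = Ideal.Quotient.mk I b • (a • m)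
    rw [Algebra.smul_def, Ideal.Quotient.algebraMap_eq, mul_smul]⟩
  have hπl : ∀ b, S.π (l b) = Ideal.Quotient.mk I b := fun b => AlgHom.congr_fun hl b
  have hπl' : ∀ b, S.π (l' b) = Ideal.Quotient.mk I b := fun b => AlgHom.congr_fun hl' b
  have hker : ∀ b : B, l b - l' b ∈ RingHom.ker S.π := fun b => by
    rw [RingHom.mem_ker, map_sub, hπl, hπl', sub_self]
  set δf : B → M := fun b => S.ι.symm ⟨l b - l' b, hker b⟩ with hδf
  have hδcoe : ∀ b, (S.ι (δf b) : S.E) = l b - l' b := fun b => by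
    rw [hδf]; dsimp only; rw [S.ι.apply_symm_apply]
  have hmul : ∀ b c : B,
      δf (b * c) = Ideal.Quotient.mk I b • δf c + Ideal.Quotient.mk I c • δf b := by
    intro b c
    apply S.ι_coe_inj
    rw [S.coe_add]
    have h1 : (S.ι (Ideal.Quotient.mk I b • δf c) : S.E) = l b * (S.ι (δf c) : S.E) :=
      S.ι_linear _ _ (l b) (hπl b)
    have h2 : (S.ι (Ideal.Quotient.mk I c • δf b) : S.E) = l' c * (S.ι (δf b) : S.E) :=
      S.ι_linear _ _ (l' c) (hπl' c)
    rw [hδcoe, h1, h2, hδcoe, hδcoe, map_mul, map_mul]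
    ring
  set δL : B →ₗ[R] M :=
  { toFun := δf
    map_add' := fun b c => by
      apply S.ι_coe_inj
      rw [S.coe_add, hδcoe, hδcoe, hδcoe, map_add, map_add]
      ring
    map_smul' := fun r b => by
      dsimp only [RingHom.id_apply]
      show δf (r • b) = algebraMap R (B ⧸ I) r • δf b
      have h0 : δf (algebraMap R B r) = 0 := by
        apply S.ι_coe_inj
        rw [hδcoe, S.coe_zero, AlgHom.commutes, AlgHom.commutes, sub_self]
      rw [Algebra.smul_def, hmul, h0, smul_zero, add_zero, halg] } with hδL
  set δ : Derivation R B M :=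
  { toLinearMap := δL
    map_one_eq_zero' := by
      apply S.ι_coe_inj
      show (S.ι (δf 1) : S.E) = (S.ι 0 : S.E)
      rw [hδcoe, S.coe_zero, map_one, map_one, sub_self]
    leibniz' := fun b c => by
      show δf (b * c) = b • δf c + c • δf b
      rw [hmul]
      rfl } with hδ
  set δ' : Ω[B⁄R] →ₗ[B] M := δ.liftKaehlerDifferential with hδ'
  set θ : ((B ⧸ I) ⊗[B] Ω[B⁄R]) →ₗ[B ⧸ I] M := δ'.liftBaseChange (B ⧸ I) with hθ
  refine ⟨θ, fun x => ?_⟩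
  have h1 : θ ((1 : B ⧸ I) ⊗ₜ[B] KaehlerDifferential.D R B (x : B)) = δf (x : B) := by
    rw [hθ, LinearMap.liftBaseChange_tmul, one_smul, hδ']
    exact Derivation.liftKaehlerDifferential_comp_D δ (x : B)
  have h2 : δf (x : B) = ν (I.toCotangent x) - ν' (I.toCotangent x) := by
    apply S.ι_coe_inj
    rw [hδcoe, S.coe_sub, hν, hν']
  rw [h1, h2]
  simp

end SquareZeroExtension

end Aux2
section Aux3

variable {R B : Type u} [CommRing R] [CommRing B] [Algebra R B] {I : Ideal B}
  {M : Type w} [AddCommGroup M] [Module (B ⧸ I) M]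

namespace SquareZeroExtension

lemma exists_decomp (S : SquareZeroExtension R (B ⧸ I) M) (l : B →ₐ[R] S.E)
    (hl : S.π.comp l = Ideal.Quotient.mkₐ R I) (e : S.E) :
    ∃ (b : B) (m : M), e = l b + (S.ι m : S.E) := by
  have hπl : ∀ b, S.π (l b) = Ideal.Quotient.mk I b := fun b => AlgHom.congr_fun hl b
  obtain ⟨b, hb⟩ := Ideal.Quotient.mk_surjective (S.π e)
  have hmem : e - l b ∈ RingHom.ker S.π := by
    rw [RingHom.mem_ker, map_sub, hπl, hb, sub_self]
  refine ⟨b, S.ι.symm ⟨e - l b, hmem⟩, ?_⟩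
  rw [S.ι.apply_symm_apply]
  show e = l b + (e - l b)
  ring

lemma exists_transfer (S S' : SquareZeroExtension R (B ⧸ I) M)
    (l : B →ₐ[R] S.E) (hl : S.π.comp l = Ideal.Quotient.mkₐ R I)
    (ν : I.Cotangent →ₗ[B ⧸ I] M)
    (hν : ∀ x : I, (S.ι (ν (I.toCotangent x)) : S.E) = l (x : B))
    (l' : B →ₐ[R] S'.E) (hl' : S'.π.comp l' = Ideal.Quotient.mkₐ R I)
    (t : B → M) (htsub : ∀ b c, t (b - c) = t b - t c)
    (ht : ∀ x : I, (S'.ι (ν (I.toCotangent x) - t (x : B)) : S'.E) = l' (x : B)) :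
    ∃ g : S.E → S'.E, ∀ (e : S.E) (b : B) (m : M),
      e = l b + (S.ι m : S.E) → g e = l' b + (S'.ι (m + t b) : S'.E) := by
  have hπl : ∀ b, S.π (l b) = Ideal.Quotient.mk I b := fun b => AlgHom.congr_fun hl b
  have hπl' : ∀ b, S'.π (l' b) = Ideal.Quotient.mk I b := fun b => AlgHom.congr_fun hl' b
  choose bb mm hbm using S.exists_decomp l hl
  refine ⟨fun e => l' (bb e) + (S'.ι (mm e + t (bb e)) : S'.E), ?_⟩
  intro e b m he
  have h0 := hbm e
  set b₀ := bb e
  set m₀ := mm e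
  have hπe : ∀ (c : B) (n : M), e = l c + (S.ι n : S.E) → S.π e = Ideal.Quotient.mk I c := by
    intro c n hcn
    rw [hcn, map_add, hπl, S.π_ι, add_zero]
  have hx0 : Ideal.Quotient.mk I (b - b₀) = 0 := by
    rw [map_sub, ← hπe b m he, ← hπe b₀ m₀ h0, sub_self]
  set x : I := ⟨b - b₀, Ideal.Quotient.eq_zero_iff_mem.mp hx0⟩ with hxdef
  have heq : l b + (S.ι m : S.E) = l b₀ + (S.ι m₀ : S.E) := he.symm.trans h0
  have hlx : l (x : B) = (S.ι m₀ : S.E) - (S.ι m : S.E) := by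
    show l (b - b₀) = _
    rw [map_sub]
    linear_combination heq
  have hνx : ν (I.toCotangent x) = m₀ - m := by
    apply S.ι_coe_inj
    rw [hν x, hlx, S.coe_sub]
  have htx : t (x : B) = t b - t b₀ := htsub b b₀
  have hι' : (S'.ι ((m₀ - m) - (t b - t b₀)) : S'.E) = l' b - l' b₀ := by
    rw [← hνx, ← htx, ht x]
    show l' (b - b₀) = _
    rw [map_sub]
  show l' b₀ + (S'.ι (m₀ + t b₀) : S'.E) = l' b + (S'.ι (m + t b) : S'.E)
  rw [show m₀ + t b₀ = ((m₀ - m) - (t b - t b₀)) + (m + t b) by abel, S'.coe_add, hι']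
  ring

set_option maxHeartbeats 2000000 in
lemma iso_of_mem (S S' : SquareZeroExtension R (B ⧸ I) M)
    (l : B →ₐ[R] S.E) (hl : S.π.comp l = Ideal.Quotient.mkₐ R I)
    (ν : I.Cotangent →ₗ[B ⧸ I] M)
    (hν : ∀ x : I, (S.ι (ν (I.toCotangent x)) : S.E) = l (x : B))
    (l' : B →ₐ[R] S'.E) (hl' : S'.π.comp l' = Ideal.Quotient.mkₐ R I)
    (ν' : I.Cotangent →ₗ[B ⧸ I] M)
    (hν' : ∀ x : I, (S'.ι (ν' (I.toCotangent x)) : S'.E) = l' (x : B))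
    (hmem : ν - ν' ∈ cotangentCoboundaries R B I M) : S.Iso S' := by
  obtain ⟨θ, hθ⟩ := hmem
  have hπl : ∀ b, S.π (l b) = Ideal.Quotient.mk I b := fun b => AlgHom.congr_fun hl b
  have hπl' : ∀ b, S'.π (l' b) = Ideal.Quotient.mk I b := fun b => AlgHom.congr_fun hl' b
  set dd : B → M := fun b => θ ((1 : B ⧸ I) ⊗ₜ[B] KaehlerDifferential.D R B b) with hdd
  have hddadd : ∀ b c, dd (b + c) = dd b + dd c := fun b c => by
    rw [hdd]
    dsimp only
    rw [map_add, TensorProduct.tmul_add, map_add]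
  have hddsub : ∀ b c, dd (b - c) = dd b - dd c := fun b c => by
    rw [hdd]
    dsimp only
    rw [map_sub, TensorProduct.tmul_sub, map_sub]
  have hddx : ∀ x : I, dd (x : B) = ν (I.toCotangent x) - ν' (I.toCotangent x) := fun x => by
    have h := hθ x
    rw [hdd]
    dsimp only
    rw [h]
    simp
  have hddmul : ∀ b c, dd (b * c)
      = Ideal.Quotient.mk I b • dd c + Ideal.Quotient.mk I c • dd b := by
    intro b c
    rw [hdd]
    dsimp only
    rw [Derivation.leibniz, TensorProduct.tmul_add, map_add]
    congr 1
    · rw [TensorProduct.tmul_smul, ← algebraMap_smul (B ⧸ I) b, map_smul,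
        Ideal.Quotient.algebraMap_eq]
    · rw [TensorProduct.tmul_smul, ← algebraMap_smul (B ⧸ I) c, map_smul,
        Ideal.Quotient.algebraMap_eq]
  have hdd0 : dd 0 = 0 := by
    have := hddsub 0 0
    simpa using this
  have hddalg : ∀ r : R, dd (algebraMap R B r) = 0 := fun r => by
    rw [hdd]
    dsimp only
    rw [Derivation.map_algebraMap, TensorProduct.tmul_zero, map_zero]
  have ht : ∀ x : I, (S'.ι (ν (I.toCotangent x) - dd (x : B)) : S'.E) = l' (x : B) := fun x => by
    rw [hddx x, show ν (I.toCotangent x) - (ν (I.toCotangent x) - ν' (I.toCotangent x))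
      = ν' (I.toCotangent x) by abel]
    exact hν' x
  obtain ⟨g, hg⟩ := exists_transfer S S' l hl ν hν l' hl' dd hddsub ht
  have ht' : ∀ x : I, (S.ι (ν' (I.toCotangent x) - (-dd (x : B))) : S.E) = l (x : B) := fun x => by
    rw [hddx x, show ν' (I.toCotangent x) - -(ν (I.toCotangent x) - ν' (I.toCotangent x))
      = ν (I.toCotangent x) by abel]
    exact hν x
  obtain ⟨g', hg'⟩ := exists_transfer S' S l' hl' ν' hν' l hl (fun b => -dd b)
    (fun b c => by show -dd (b - c) = -dd b - -dd c; rw [hddsub]; abel) ht'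
  have hzero : ∀ m n : M, (S.ι m : S.E) * (S.ι n : S.E) = 0 := fun m n =>
    S.squareZero _ (S.ι m).2 _ (S.ι n).2
  have hzero' : ∀ m n : M, (S'.ι m : S'.E) * (S'.ι n : S'.E) = 0 := fun m n =>
    S'.squareZero _ (S'.ι m).2 _ (S'.ι n).2
  refine ⟨{ toFun := g
            invFun := g'
            left_inv := fun e => by
              obtain ⟨b, m, rfl⟩ := S.exists_decomp l hl e
              rw [hg _ b m rfl, hg' _ b (m + dd b) rfl, show m + dd b + -dd b = m by abel]
            right_inv := fun e => by
              obtain ⟨b, m, rfl⟩ := S'.exists_decomp l' hl' e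
              rw [hg' _ b m rfl, hg _ b (m + -dd b) rfl, show m + -dd b + dd b = m by abel]
            map_mul' := fun e₁ e₂ => by
              obtain ⟨b₁, m₁, rfl⟩ := S.exists_decomp l hl e₁
              obtain ⟨b₂, m₂, rfl⟩ := S.exists_decomp l hl e₂
              have hprod : (l b₁ + (S.ι m₁ : S.E)) * (l b₂ + (S.ι m₂ : S.E))
                  = l (b₁ * b₂) + (S.ι (Ideal.Quotient.mk I b₁ • m₂
                    + Ideal.Quotient.mk I b₂ • m₁) : S.E) := by
                rw [map_mul, S.coe_add, S.ι_linear (Ideal.Quotient.mk I b₁) m₂ (l b₁) (hπl b₁),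
                  S.ι_linear (Ideal.Quotient.mk I b₂) m₁ (l b₂) (hπl b₂)]
                linear_combination hzero m₁ m₂
              have hprod' : (l' b₁ + (S'.ι (m₁ + dd b₁) : S'.E))
                    * (l' b₂ + (S'.ι (m₂ + dd b₂) : S'.E))
                  = l' (b₁ * b₂) + (S'.ι (Ideal.Quotient.mk I b₁ • (m₂ + dd b₂)
                    + Ideal.Quotient.mk I b₂ • (m₁ + dd b₁)) : S'.E) := by
                rw [map_mul, S'.coe_add (Ideal.Quotient.mk I b₁ • (m₂ + dd b₂))
                    (Ideal.Quotient.mk I b₂ • (m₁ + dd b₁)),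
                  S'.ι_linear (Ideal.Quotient.mk I b₁) (m₂ + dd b₂) (l' b₁) (hπl' b₁),
                  S'.ι_linear (Ideal.Quotient.mk I b₂) (m₁ + dd b₁) (l' b₂) (hπl' b₂)]
                linear_combination hzero' (m₁ + dd b₁) (m₂ + dd b₂)
              show g _ = g _ * g _
              rw [hg _ _ _ hprod, hg _ b₁ m₁ rfl, hg _ b₂ m₂ rfl, hprod',
                show Ideal.Quotient.mk I b₁ • m₂ + Ideal.Quotient.mk I b₂ • m₁ + dd (b₁ * b₂)
                  = Ideal.Quotient.mk I b₁ • (m₂ + dd b₂)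
                    + Ideal.Quotient.mk I b₂ • (m₁ + dd b₁) by
                  rw [hddmul, smul_add, smul_add]; abel]
            map_add' := fun e₁ e₂ => by
              obtain ⟨b₁, m₁, rfl⟩ := S.exists_decomp l hl e₁
              obtain ⟨b₂, m₂, rfl⟩ := S.exists_decomp l hl e₂
              have hsum : (l b₁ + (S.ι m₁ : S.E)) + (l b₂ + (S.ι m₂ : S.E))
                  = l (b₁ + b₂) + (S.ι (m₁ + m₂) : S.E) := by
                rw [map_add, S.coe_add]; ring
              show g _ = g _ + g _
              rw [hg _ _ _ hsum, hg _ b₁ m₁ rfl, hg _ b₂ m₂ rfl, map_add l', hddadd,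
                show m₁ + m₂ + (dd b₁ + dd b₂) = (m₁ + dd b₁) + (m₂ + dd b₂) by abel,
                S'.coe_add (m₁ + dd b₁) (m₂ + dd b₂)]
              ring
            commutes' := fun r => by
              have hr : algebraMap R S.E r = l (algebraMap R B r) + (S.ι 0 : S.E) := by
                rw [S.coe_zero, add_zero, AlgHom.commutes]
              show g _ = _
              rw [hg _ _ _ hr, hddalg, add_zero, S'.coe_zero, add_zero,
                AlgHom.commutes] }, ?_, ?_⟩
  · intro e
    obtain ⟨b, m, rfl⟩ := S.exists_decomp l hl e
    show S'.π (g _) = _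
    have h1 : S'.π (l' b + (S'.ι (m + dd b) : S'.E)) = Ideal.Quotient.mk I b := by
      rw [map_add, hπl', S'.π_ι, add_zero]
    have h2 : S.π (l b + (S.ι m : S.E)) = Ideal.Quotient.mk I b := by
      rw [map_add, hπl, S.π_ι, add_zero]
    rw [hg _ b m rfl, h1, h2]
  · intro m
    have h1 : (S.ι m : S.E) = l 0 + (S.ι m : S.E) := by rw [map_zero, zero_add]
    show g _ = _
    rw [hg _ 0 m h1, map_zero, zero_add, hdd0, add_zero]

end SquareZeroExtension

end Aux3
section Aux4

variable {R B : Type u} [CommRing R] [CommRing B] [Algebra R B] {I : Ideal B}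
  {M : Type w} [AddCommGroup M] [Module (B ⧸ I) M]

set_option maxHeartbeats 4000000 in
set_option synthInstance.maxHeartbeats 400000 in
open TrivSqZeroExt in
lemma SquareZeroExtension.exists_realization (ν : I.Cotangent →ₗ[B ⧸ I] M) :
    ∃ (S : SquareZeroExtension R (B ⧸ I) M) (l : B →ₐ[R] S.E),
      S.π.comp l = Ideal.Quotient.mkₐ R I ∧
      ∀ x : I, (S.ι (ν (I.toCotangent x)) : S.E) = l (x : B) := by
  classical
  letI : Module B M := Module.compHom M (Ideal.Quotient.mk I)
  letI : Module R M := Module.compHom M ((algebraMap R (B ⧸ I) : R →+* B ⧸ I))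
  letI : Module Bᵐᵒᵖ M := Module.compHom M
    ((Ideal.Quotient.mk I).fromOpposite (fun a b => Commute.all _ _))
  have halg : ∀ r : R, Ideal.Quotient.mk I (algebraMap R B r) = algebraMap R (B ⧸ I) r :=
    fun r => (Ideal.Quotient.mkₐ R I).commutes r
  haveI : IsCentralScalar B M := ⟨fun b m => rfl⟩
  haveI : SMulCommClass B Bᵐᵒᵖ M := ⟨fun b c m => by
    show Ideal.Quotient.mk I b • (Ideal.Quotient.mk I c.unop • m)
      = Ideal.Quotient.mk I c.unop • (Ideal.Quotient.mk I b • m)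
    rw [smul_smul, smul_smul, mul_comm]⟩
  haveI : IsScalarTower R (B ⧸ I) M := ⟨fun r a m => by
    show (r • a) • m = algebraMap R (B ⧸ I) r • (a • m)
    rw [Algebra.smul_def, mul_smul]⟩
  haveI : IsScalarTower R B M := ⟨fun r b m => by
    show Ideal.Quotient.mk I (r • b) • m
      = algebraMap R (B ⧸ I) r • (Ideal.Quotient.mk I b • m)
    rw [Algebra.smul_def, map_mul, halg, mul_smul]⟩
  haveI : IsScalarTower R Bᵐᵒᵖ M := ⟨fun r c m => by
    show Ideal.Quotient.mk I (r • c).unop • m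
      = algebraMap R (B ⧸ I) r • (Ideal.Quotient.mk I c.unop • m)
    rw [show (r • c).unop = r • c.unop from rfl, Algebra.smul_def, map_mul, halg, mul_smul]⟩
  haveI : IsScalarTower B (B ⧸ I) M := ⟨fun b a m => by
    show (b • a) • m = Ideal.Quotient.mk I b • (a • m)
    rw [Algebra.smul_def, Ideal.Quotient.algebraMap_eq, mul_smul]⟩
  have hmkcot : ∀ (b : B) (c : I.Cotangent), Ideal.Quotient.mk I b • c = b • c := fun b c => by
    rw [← algebraMap_smul (B ⧸ I) b c]; rfl
  have hsmulM : ∀ (b : B) (m : M), b • m = Ideal.Quotient.mk I b • m := fun _ _ => rfl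
  have hopsmulM : ∀ (b : B) (m : M), MulOpposite.op b • m = Ideal.Quotient.mk I b • m :=
    fun _ _ => rfl
  have hν_smul : ∀ (b : B) (x : I), ν (I.toCotangent (b • x))
      = Ideal.Quotient.mk I b • ν (I.toCotangent x) := by
    intro b x
    rw [map_smul I.toCotangent b x, ← hmkcot, map_smul]
  have hν_zero : ∀ x : I, (x : B) = 0 → ν (I.toCotangent x) = 0 := by
    intro x hx
    have : x = 0 := Subtype.ext hx
    rw [this, map_zero, map_zero]
  set J : Ideal (TrivSqZeroExt B M) :=
  { carrier := Set.range (fun x : I =>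
      (inl (x : B) : TrivSqZeroExt B M) - inr (ν (I.toCotangent x)))
    add_mem' := by
      rintro a b ⟨x, rfl⟩ ⟨y, rfl⟩
      refine ⟨x + y, ?_⟩
      dsimp only
      rw [Submodule.coe_add, inl_add, map_add, map_add, inr_add]
      abel
    zero_mem' := by
      refine ⟨0, ?_⟩
      simp
    smul_mem' := by
      rintro c t ⟨x, rfl⟩
      refine ⟨c.fst • x, ?_⟩
      dsimp only
      rw [smul_eq_mul]
      refine TrivSqZeroExt.ext ?_ ?_
      · rw [fst_mul, fst_sub, fst_inl, fst_inr, sub_zero, fst_sub, fst_inl, fst_inr, sub_zero]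
        rfl
      · rw [snd_mul, snd_sub, snd_inl, snd_inr, zero_sub, fst_sub, fst_inl, fst_inr, sub_zero,
          snd_sub, snd_inl, snd_inr, zero_sub]
        rw [hopsmulM, Ideal.Quotient.eq_zero_iff_mem.mpr x.2, zero_smul, add_zero,
          hsmulM, smul_neg, hν_smul] } with hJ
  set πT : TrivSqZeroExt B M →ₐ[R] B ⧸ I :=
    (Ideal.Quotient.mkₐ R I).comp (TrivSqZeroExt.fstHom R B M) with hπT
  have hπTJ : ∀ t ∈ J, πT t = 0 := by
    rintro t ⟨x, rfl⟩
    show Ideal.Quotient.mk I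
      (fst ((inl (x : B) : TrivSqZeroExt B M) - inr (ν (I.toCotangent x)))) = 0
    rw [fst_sub, fst_inl, fst_inr, sub_zero, Ideal.Quotient.eq_zero_iff_mem]
    exact x.2
  set πE : (TrivSqZeroExt B M ⧸ J) →ₐ[R] B ⧸ I := Ideal.Quotient.liftₐ J πT hπTJ with hπE
  have hπmk : ∀ t : TrivSqZeroExt B M,
      πE (Ideal.Quotient.mk J t) = Ideal.Quotient.mk I t.fst := by
    intro t
    rw [hπE, Ideal.Quotient.liftₐ_apply]
    rfl
  have hsurj : Function.Surjective πE := by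
    intro a
    obtain ⟨b, rfl⟩ := Ideal.Quotient.mk_surjective a
    exact ⟨Ideal.Quotient.mk J (inl b), by rw [hπmk, fst_inl]⟩
  have hJmem : ∀ x : I, (inl (x : B) : TrivSqZeroExt B M) - inr (ν (I.toCotangent x)) ∈ J :=
    fun x => ⟨x, rfl⟩
  have hkerrep : ∀ e ∈ RingHom.ker πE, ∃ m : M, Ideal.Quotient.mk J (inr m) = e := by
    intro e he
    obtain ⟨t, rfl⟩ := Ideal.Quotient.mk_surjective e
    rw [RingHom.mem_ker, hπmk] at he
    set x : I := ⟨t.fst, Ideal.Quotient.eq_zero_iff_mem.mp he⟩ with hx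
    refine ⟨t.snd + ν (I.toCotangent x), ?_⟩
    symm
    rw [Ideal.Quotient.mk_eq_mk_iff_sub_mem]
    have heq : t - inr (t.snd + ν (I.toCotangent x))
        = inl (x : B) - inr (ν (I.toCotangent x)) := by
      refine TrivSqZeroExt.ext ?_ ?_
      · rw [fst_sub, fst_inr, sub_zero, fst_sub, fst_inl, fst_inr, sub_zero]
      · rw [snd_sub, snd_inr, snd_sub, snd_inl, snd_inr, zero_sub]
        abel
    rw [heq]
    exact hJmem x
  have hinrmem : ∀ m : M, Ideal.Quotient.mk J (inr m) ∈ RingHom.ker πE := by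
    intro m
    rw [RingHom.mem_ker, hπmk, fst_inr, map_zero]
  set ι0 : M →+ RingHom.ker πE :=
  { toFun := fun m => ⟨Ideal.Quotient.mk J (inr m), hinrmem m⟩
    map_zero' := by
      apply Subtype.ext
      show Ideal.Quotient.mk J (inr (0 : M)) = 0
      rw [inr_zero, map_zero]
    map_add' := fun m n => by
      apply Subtype.ext
      show Ideal.Quotient.mk J (inr (m + n))
        = Ideal.Quotient.mk J (inr m) + Ideal.Quotient.mk J (inr n)
      rw [inr_add, map_add] } with hι0
  have hι0inj : Function.Injective ι0 := by
    intro m n hmn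
    have h1 : Ideal.Quotient.mk J (inr m) = Ideal.Quotient.mk J (inr n) :=
      congrArg Subtype.val hmn
    rw [Ideal.Quotient.mk_eq_mk_iff_sub_mem] at h1
    obtain ⟨x, hx⟩ := h1
    have hfst : (x : B) = 0 := by simpa using congrArg TrivSqZeroExt.fst hx
    have hν0 : ν (I.toCotangent x) = 0 := hν_zero x hfst
    have hsnd := congrArg TrivSqZeroExt.snd hx
    simp only [snd_sub, snd_inl, snd_inr, hν0, zero_sub, neg_zero] at hsnd
    exact sub_eq_zero.mp hsnd.symm
  have hι0surj : Function.Surjective ι0 := by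
    rintro ⟨e, he⟩
    obtain ⟨m, hm⟩ := hkerrep e he
    exact ⟨m, Subtype.ext hm⟩
  have hsq : ∀ a ∈ RingHom.ker πE, ∀ b ∈ RingHom.ker πE, a * b = 0 := by
    intro a ha b hb
    obtain ⟨m, hm⟩ := hkerrep a ha
    obtain ⟨n, hn⟩ := hkerrep b hb
    rw [← hm, ← hn, ← map_mul, inr_mul_inr, map_zero]
  refine ⟨{ E := TrivSqZeroExt B M ⧸ J
            π := πE
            surjective := hsurj
            squareZero := hsq
            ι := AddEquiv.ofBijective ι0 ⟨hι0inj, hι0surj⟩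
            ι_linear := ?_ },
    (Ideal.Quotient.mkₐ R J).comp (TrivSqZeroExt.inlAlgHom R B M), ?_, ?_⟩
  · intro a m e he
    obtain ⟨t, rfl⟩ := Ideal.Quotient.mk_surjective e
    have ha : a = Ideal.Quotient.mk I t.fst := by rw [← he, hπmk]
    show Ideal.Quotient.mk J (inr (a • m)) = Ideal.Quotient.mk J t * Ideal.Quotient.mk J (inr m)
    rw [← map_mul]
    congr 1
    refine TrivSqZeroExt.ext ?_ ?_
    · rw [fst_inr, fst_mul, fst_inr, mul_zero]
    · rw [snd_inr, snd_mul, snd_inr, fst_inr]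
      rw [show (MulOpposite.op (0 : B) • t.snd : M) = 0 by
        rw [hopsmulM, map_zero, zero_smul], add_zero,
        show (t.fst • m : M) = Ideal.Quotient.mk I t.fst • m from rfl, ← ha]
  · apply AlgHom.ext
    intro b
    show πE (Ideal.Quotient.mk J (inl b)) = Ideal.Quotient.mk I b
    rw [hπmk, fst_inl]
  · intro x
    show Ideal.Quotient.mk J (inr (ν (I.toCotangent x))) = Ideal.Quotient.mk J (inl (x : B))
    symm
    rw [Ideal.Quotient.mk_eq_mk_iff_sub_mem]
    exact hJmem x
/-- **Corollary 2 (extcor), affine non-equivariant content**, following Proposition 2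
(ext1prop) of "Equivariant deformations of singular curves with group scheme action":
for `B` a formally smooth commutative `R`-algebra, `I ≤ B` an ideal, `A := B/I` and `M` an
`A`-module, every square-zero extension `(E, π, ι)` of `A` by `M` admits an `R`-algebra
lift `λ : B → E` of the quotient map; the class in `Hom_A(I/I², M)/range(d*)` of the map
`ν` determined by `ι(ν(x + I²)) = λ(x)` does not depend on the choice of `λ`; and the
resulting assignment is a bijection from the set of isomorphism classes of square-zero
extensions of `A` by `M` onto `Hom_A(I/I², M)/range(d*)`. -/
theorem squareZeroExtension_isoClasses_equiv_cotangent_quotient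
    (R B : Type u) [CommRing R] [CommRing B] [Algebra R B] [Algebra.FormallySmooth R B]
    (I : Ideal B) (M : Type w) [AddCommGroup M] [Module (B ⧸ I) M] :
    (∀ S : SquareZeroExtension R (B ⧸ I) M,
      ∃ l : B →ₐ[R] S.E, S.π.comp l = Ideal.Quotient.mkₐ R I) ∧
    (∀ (S : SquareZeroExtension R (B ⧸ I) M) (l : B →ₐ[R] S.E),
      S.π.comp l = Ideal.Quotient.mkₐ R I →
      ∃ ν : I.Cotangent →ₗ[B ⧸ I] M, ∀ x : I, (S.ι (ν (I.toCotangent x)) : S.E) = l x) ∧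
    ∃ Φ : SquareZeroExtension R (B ⧸ I) M →
        ((I.Cotangent →ₗ[B ⧸ I] M) ⧸ cotangentCoboundaries R B I M),
      (∀ S S' : SquareZeroExtension R (B ⧸ I) M, (S.Iso S' ↔ Φ S = Φ S')) ∧
      Function.Surjective Φ ∧
      (∀ (S : SquareZeroExtension R (B ⧸ I) M) (l : B →ₐ[R] S.E),
        S.π.comp l = Ideal.Quotient.mkₐ R I →
        ∀ ν : I.Cotangent →ₗ[B ⧸ I] M,
          (∀ x : I, (S.ι (ν (I.toCotangent x)) : S.E) = l x) →
          Φ S = Submodule.Quotient.mk ν) := by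
  classical
  have part1 : ∀ S : SquareZeroExtension R (B ⧸ I) M,
      ∃ l : B →ₐ[R] S.E, S.π.comp l = Ideal.Quotient.mkₐ R I :=
    fun S => S.exists_lift
  have part2 : ∀ (S : SquareZeroExtension R (B ⧸ I) M) (l : B →ₐ[R] S.E),
      S.π.comp l = Ideal.Quotient.mkₐ R I →
      ∃ ν : I.Cotangent →ₗ[B ⧸ I] M, ∀ x : I, (S.ι (ν (I.toCotangent x)) : S.E) = l x :=
    fun S l hl => S.exists_nu l hl
  refine ⟨part1, part2, ?_⟩
  choose lS hlS using part1
  choose νS hνS using fun S => part2 S (lS S) (hlS S)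
  set Φ : SquareZeroExtension R (B ⧸ I) M →
      ((I.Cotangent →ₗ[B ⧸ I] M) ⧸ cotangentCoboundaries R B I M) :=
    fun S => Submodule.Quotient.mk (νS S) with hΦ
  have indep : ∀ (S : SquareZeroExtension R (B ⧸ I) M) (l : B →ₐ[R] S.E),
      S.π.comp l = Ideal.Quotient.mkₐ R I →
      ∀ ν : I.Cotangent →ₗ[B ⧸ I] M,
        (∀ x : I, (S.ι (ν (I.toCotangent x)) : S.E) = l x) →
        Φ S = Submodule.Quotient.mk ν := by
    intro S l hl ν hν
    rw [hΦ]
    dsimp only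
    rw [Submodule.Quotient.eq]
    exact S.nu_diff (lS S) l (hlS S) hl (νS S) ν (hνS S) hν
  refine ⟨Φ, ?_, ?_, indep⟩
  · intro S S'
    constructor
    · rintro ⟨f, hfπ, hfι⟩
      have hl' : S'.π.comp (f.toAlgHom.comp (lS S)) = Ideal.Quotient.mkₐ R I := by
        apply AlgHom.ext
        intro b
        show S'.π (f (lS S b)) = _
        rw [hfπ]
        exact AlgHom.congr_fun (hlS S) b
      have hν' : ∀ x : I, (S'.ι (νS S (I.toCotangent x)) : S'.E)
          = (f.toAlgHom.comp (lS S)) (x : B) := by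
        intro x
        show _ = f (lS S (x : B))
        rw [← hνS S x, hfι]
      have h1 : Φ S' = Submodule.Quotient.mk (νS S) :=
        indep S' (f.toAlgHom.comp (lS S)) hl' (νS S) hν'
      have h2 : Φ S = Submodule.Quotient.mk (νS S) :=
        indep S (lS S) (hlS S) (νS S) (hνS S)
      rw [h1, h2]
    · intro h
      have hmem : νS S - νS S' ∈ cotangentCoboundaries R B I M := by
        rw [← Submodule.Quotient.eq]
        exact h
      exact SquareZeroExtension.iso_of_mem S S' (lS S) (hlS S) (νS S) (hνS S)
        (lS S') (hlS S') (νS S') (hνS S') hmem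
  · intro c
    obtain ⟨ν, rfl⟩ := Submodule.Quotient.mk_surjective _ c
    obtain ⟨S, l, hl, hν⟩ := SquareZeroExtension.exists_realization (R := R) ν
    exact ⟨S, indep S l hl ν hν⟩
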